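/- arXiv:math/9611214 — 2 statements merged into one kernel-verified Lean document; each statement's English description precedes it below -/
import Mathlib

section
/- For any integer m > 0 and any choice of elements σ_i ∈ F₂ (1 ≤ i ≤ m), χ_ij ∈ F₂ (1 ≤ i < j ≤ m), and α_ijk ∈ F₂ (1 ≤ i < j < k ≤ m), there exist an integer n and a doubly even binary code C ⊆ F₂ⁿ of dimension m with a basis c₁, …, c_m such that wt(c_i)/4 ≡ σ_i (mod 2) for all i, wt(c_i∩c_j)/2 ≡ χ_ij (mod 2) for all i < j, and wt(c_i∩c_j∩c_k) ≡ α_ijk (mod 2) for all i < j < k. -/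
/-- The Hamming weight of a binary vector. -/
def wt {n : ℕ} (c : Fin n → ZMod 2) : ℕ :=
  (Finset.univ.filter fun i => c i ≠ 0).card

/-- The number of coordinates where both vectors are nonzero. -/
def wt2 {n : ℕ} (c d : Fin n → ZMod 2) : ℕ :=
  (Finset.univ.filter fun i => c i ≠ 0 ∧ d i ≠ 0).card

/-- The number of coordinates where all three vectors are nonzero. -/
def wt3 {n : ℕ} (c d e : Fin n → ZMod 2) : ℕ :=
  (Finset.univ.filter fun i => c i ≠ 0 ∧ d i ≠ 0 ∧ e i ≠ 0).card

/-!
Think of a code with basis `c₁, …, c_m` and length `n` as its family of `n` columns, each column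
being the set `S ⊆ {1, …, m}` of rows carrying a `1`. Then `wt(c_i)`, `wt(c_i ∩ c_j)` and
`wt(c_i ∩ c_j ∩ c_k)` count the columns containing `i`, `{i, j}` and `{i, j, k}`. Take a column
`{i, j, k}` for every triple with `α_ijk = 1`; then add columns `{i, j}` to correct
`wt(c_i ∩ c_j)` modulo `4`, and finally singleton columns to correct `wt(c_i)` modulo `8`. Smaller
columns never change the counts of larger sets, and the singletons make the `c_i` independent.
The code is doubly even since `wt(u + v) = wt u + wt v - 2 wt(u ∩ v)` and `wt(u ∩ v)` is, modulo
`2`, the bilinear form `u ⬝ᵥ v`.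
-/

open Finset Matrix Submodule

section Weights

variable {n : ℕ}

lemma wt2_comm (u v : Fin n → ZMod 2) : wt2 u v = wt2 v u := by
  simp only [wt2, and_comm]

lemma wt2_self (u : Fin n → ZMod 2) : wt2 u u = wt u := by
  simp only [wt2, and_self, wt]

lemma wt_add_add_two_mul_wt2 (u v : Fin n → ZMod 2) :
    wt (u + v) + 2 * wt2 u v = wt u + wt v := by
  simp only [wt, wt2, card_filter, mul_sum, ← sum_add_distrib, Pi.add_apply]
  refine sum_congr rfl fun x _ => ?_
  generalize u x = a, v x = b
  revert a b
  decide

lemma natCast_wt2 (u v : Fin n → ZMod 2) : (wt2 u v : ZMod 2) = u ⬝ᵥ v := by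
  rw [wt2, natCast_card_filter, dotProduct]
  refine sum_congr rfl fun x _ => ?_
  generalize u x = a, v x = b
  revert a b
  decide

lemma dotProduct_eq_zero_of_mem_span {R ι : Type*} [CommRing R] [Fintype ι] {s : Set (ι → R)}
    (hs : ∀ u ∈ s, ∀ v ∈ s, u ⬝ᵥ v = 0) {u v : ι → R} (hu : u ∈ span R s) (hv : v ∈ span R s) :
    u ⬝ᵥ v = 0 := by
  induction hu, hv using span_induction₂ with
  | mem_mem x y hx hy => exact hs x hx y hy
  | zero_left => simp
  | zero_right => simp
  | add_left x y z _ _ _ hx hy => simp [add_dotProduct, hx, hy]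
  | add_right x y z _ _ _ hy hz => simp [dotProduct_add, hy, hz]
  | smul_left r x y _ _ h => simp [h]
  | smul_right r x y _ _ h => simp [h]

theorem four_dvd_wt_of_mem_span {s : Set (Fin n → ZMod 2)} (hwt : ∀ u ∈ s, 4 ∣ wt u)
    (hwt2 : ∀ u ∈ s, ∀ v ∈ s, 2 ∣ wt2 u v) {v : Fin n → ZMod 2} (hv : v ∈ span (ZMod 2) s) :
    4 ∣ wt v := by
  have horth : ∀ u ∈ s, ∀ v ∈ s, u ⬝ᵥ v = 0 := fun u hu v hv => by
    rw [← natCast_wt2, ZMod.natCast_eq_zero_iff]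
    exact hwt2 u hu v hv
  induction hv using span_induction with
  | mem x hx => exact hwt x hx
  | zero => simp [wt]
  | add x y hx hy hx4 hy4 =>
    have hxy : 2 ∣ wt2 x y := by
      rw [← ZMod.natCast_eq_zero_iff, natCast_wt2]
      exact dotProduct_eq_zero_of_mem_span horth hx hy
    have := wt_add_add_two_mul_wt2 x y
    omega
  | smul r x _ hx4 =>
    obtain rfl | rfl : r = 0 ∨ r = 1 := by decide +revert
    · simp [wt]
    · simpa using hx4

theorem four_dvd_wt_of_mem_span_range {ι : Type*} [LinearOrder ι] {c : ι → Fin n → ZMod 2}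
    (hwt : ∀ i, 4 ∣ wt (c i)) (hwt2 : ∀ i j, i < j → 2 ∣ wt2 (c i) (c j))
    {v : Fin n → ZMod 2} (hv : v ∈ span (ZMod 2) (Set.range c)) : 4 ∣ wt v := by
  refine four_dvd_wt_of_mem_span ?_ ?_ hv
  · rintro _ ⟨i, rfl⟩
    exact hwt i
  · rintro _ ⟨i, rfl⟩ _ ⟨j, rfl⟩
    rcases lt_trichotomy i j with h | rfl | h
    · exact hwt2 i j h
    · rw [wt2_self]
      exact dvd_trans (by norm_num) (hwt i)
    · rw [wt2_comm]
      exact hwt2 j i h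

end Weights

lemma card_filter_toList_getElem {α : Type*} (M : Multiset α) (p : α → Prop) [DecidablePred p] :
    #{x : Fin M.toList.length | p M.toList[x]} = M.countP p :=
  calc #{x : Fin M.toList.length | p M.toList[x]}
      = (univ.val.map (M.toList[·] : Fin M.toList.length → α)).countP p := by
        rw [Multiset.countP_map]; rfl
    _ = M.countP p := by
        simp only [Fin.univ_val_map, Fin.getElem_fin, List.ofFn_getElem, M.coe_toList]

lemma countP_sum_replicate {κ β : Type*} (p : β → Prop) [DecidablePred p] (s : Finset κ)
    (f : κ → ℕ) (S : κ → β) :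
    (∑ x ∈ s, Multiset.replicate (f x) (S x)).countP p = ∑ x ∈ s with p (S x), f x := by
  rw [← Multiset.coe_countPAddMonoidHom, map_sum, sum_filter]
  refine sum_congr rfl fun x _ => ?_
  simp [← Multiset.coe_replicate, List.countP_replicate]

lemma exists_pos_add_mod_eq (N r : ℕ) {q : ℕ} (hq : 0 < q) :
    ∃ s, 0 < s ∧ (N + s) % q = r % q := by
  have : N + 1 ≤ q * (N + 1) := Nat.le_mul_of_pos_left _ hq
  refine ⟨r % q + q * (N + 1) - N, by omega, ?_⟩
  rw [show N + (r % q + q * (N + 1) - N) = r % q + q * (N + 1) by omega,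
    Nat.add_mul_mod_self_left, Nat.mod_mod]

lemma natCast_div_eq_of_mod_eq {w q : ℕ} {a : ZMod 2} (hq : 0 < q)
    (h : w % (q * 2) = q * a.val) : ((w / q : ℕ) : ZMod 2) = a := by
  rw [← ZMod.natCast_mod, ← Nat.mod_mul_right_div_self, h, Nat.mul_div_cancel_left _ hq,
    ZMod.natCast_zmod_val]

section Columns

variable {m : ℕ} (M : Multiset (Finset (Fin m)))

noncomputable def columnCode (i : Fin m) : Fin M.toList.length → ZMod 2 :=
  fun x => if i ∈ M.toList[x] then 1 else 0

lemma columnCode_ne_zero_iff {i : Fin m} {x : Fin M.toList.length} :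
    columnCode M i x ≠ 0 ↔ i ∈ M.toList[x] := by
  simp [columnCode]

lemma wt_columnCode (i : Fin m) : wt (columnCode M i) = M.countP (i ∈ ·) := by
  simp only [wt, columnCode_ne_zero_iff]
  exact card_filter_toList_getElem M (i ∈ ·)

lemma wt2_columnCode (i j : Fin m) :
    wt2 (columnCode M i) (columnCode M j) = M.countP fun S => i ∈ S ∧ j ∈ S := by
  simp only [wt2, columnCode_ne_zero_iff]
  exact card_filter_toList_getElem M fun S => i ∈ S ∧ j ∈ S

lemma wt3_columnCode (i j k : Fin m) :
    wt3 (columnCode M i) (columnCode M j) (columnCode M k) =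
      M.countP fun S => i ∈ S ∧ j ∈ S ∧ k ∈ S := by
  simp only [wt3, columnCode_ne_zero_iff]
  exact card_filter_toList_getElem M fun S => i ∈ S ∧ j ∈ S ∧ k ∈ S

lemma linearIndependent_columnCode (hM : ∀ i, {i} ∈ M) :
    LinearIndependent (ZMod 2) (columnCode M) := by
  rw [Fintype.linearIndependent_iff]
  intro g hg i
  obtain ⟨x, hx, hxi⟩ := List.getElem_of_mem (Multiset.mem_toList.2 (hM i))
  simpa [columnCode, Fin.getElem_fin, hxi] using congrFun hg ⟨x, hx⟩

end Columns

section Construction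

variable {m : ℕ}

def singletonColumns (s : Fin m → ℕ) : Multiset (Finset (Fin m)) :=
  ∑ a, Multiset.replicate (s a) {a}

def pairColumns (t : Fin m → Fin m → ℕ) : Multiset (Finset (Fin m)) :=
  ∑ p : Fin m × Fin m with p.1 < p.2, Multiset.replicate (t p.1 p.2) {p.1, p.2}

def tripleColumns (α : Fin m → Fin m → Fin m → ZMod 2) : Multiset (Finset (Fin m)) :=
  ∑ p : Fin m × Fin m × Fin m with p.1 < p.2.1 ∧ p.2.1 < p.2.2,
    Multiset.replicate (α p.1 p.2.1 p.2.2).val {p.1, p.2.1, p.2.2}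

lemma singleton_mem_singletonColumns {s : Fin m → ℕ} {i : Fin m} (hs : 0 < s i) :
    {i} ∈ singletonColumns s :=
  Multiset.mem_sum.2 ⟨i, mem_univ i, Multiset.mem_replicate.2 ⟨hs.ne', rfl⟩⟩

lemma countP_mem_singletonColumns (s : Fin m → ℕ) (i : Fin m) :
    (singletonColumns s).countP (i ∈ ·) = s i := by
  rw [singletonColumns, countP_sum_replicate]
  simp [filter_eq]

lemma countP_mem_mem_singletonColumns (s : Fin m → ℕ) {i j : Fin m} (hij : i ≠ j) :
    (singletonColumns s).countP (fun S => i ∈ S ∧ j ∈ S) = 0 := by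
  rw [singletonColumns, countP_sum_replicate]
  refine sum_eq_zero fun a ha => absurd ha ?_
  simp only [mem_filter, mem_singleton]
  grind

lemma countP_mem_mem_mem_singletonColumns (s : Fin m → ℕ) {i j k : Fin m} (hij : i ≠ j) :
    (singletonColumns s).countP (fun S => i ∈ S ∧ j ∈ S ∧ k ∈ S) = 0 := by
  rw [singletonColumns, countP_sum_replicate]
  refine sum_eq_zero fun a ha => absurd ha ?_
  simp only [mem_filter, mem_singleton]
  grind

lemma countP_mem_mem_pairColumns (t : Fin m → Fin m → ℕ) {i j : Fin m} (hij : i < j) :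
    (pairColumns t).countP (fun S => i ∈ S ∧ j ∈ S) = t i j := by
  rw [pairColumns, countP_sum_replicate, filter_filter,
    sum_eq_single_of_mem (i, j) (by simp [hij])]
  rintro ⟨a, b⟩ hp hne
  simp only [mem_filter, mem_univ, mem_insert, mem_singleton, true_and] at hp
  grind

lemma countP_mem_mem_mem_pairColumns (t : Fin m → Fin m → ℕ) {i j k : Fin m} (hij : i < j)
    (hjk : j < k) :
    (pairColumns t).countP (fun S => i ∈ S ∧ j ∈ S ∧ k ∈ S) = 0 := by
  rw [pairColumns, countP_sum_replicate]
  refine sum_eq_zero fun a ha => absurd ha ?_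
  simp only [mem_filter, mem_insert, mem_singleton]
  grind

lemma countP_mem_mem_mem_tripleColumns (α : Fin m → Fin m → Fin m → ZMod 2) {i j k : Fin m}
    (hij : i < j) (hjk : j < k) :
    (tripleColumns α).countP (fun S => i ∈ S ∧ j ∈ S ∧ k ∈ S) = (α i j k).val := by
  rw [tripleColumns, countP_sum_replicate, filter_filter,
    sum_eq_single_of_mem (i, j, k) (by simp [hij, hjk])]
  rintro ⟨a, b, c⟩ hp hne
  simp only [mem_filter, mem_univ, mem_insert, mem_singleton, true_and] at hp
  grind

end Construction

theorem stmt15_general (m : ℕ) (σv : Fin m → ZMod 2)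
    (χv : Fin m → Fin m → ZMod 2) (αv : Fin m → Fin m → Fin m → ZMod 2) :
    ∃ (n : ℕ) (c : Fin m → (Fin n → ZMod 2)),
      LinearIndependent (ZMod 2) c ∧
      (∀ v ∈ Submodule.span (ZMod 2) (Set.range c), wt v % 4 = 0) ∧
      (∀ i : Fin m, ((wt (c i) / 4 : ℕ) : ZMod 2) = σv i) ∧
      (∀ i j : Fin m, i < j → ((wt2 (c i) (c j) / 2 : ℕ) : ZMod 2) = χv i j) ∧
      (∀ i j k : Fin m, i < j → j < k →
        ((wt3 (c i) (c j) (c k) : ℕ) : ZMod 2) = αv i j k) := by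
  choose t _ ht using fun i j => exists_pos_add_mod_eq
    ((tripleColumns αv).countP fun S => i ∈ S ∧ j ∈ S) (2 * (χv i j).val) (q := 4) (by norm_num)
  choose s hs_pos hs using fun i => exists_pos_add_mod_eq
    ((tripleColumns αv + pairColumns t).countP (i ∈ ·)) (4 * (σv i).val) (q := 8) (by norm_num)
  set M := tripleColumns αv + pairColumns t + singletonColumns s
  have hwt (i : Fin m) : wt (columnCode M i) % (4 * 2) = 4 * (σv i).val := by
    rw [wt_columnCode, Multiset.countP_add, countP_mem_singletonColumns, hs]
    have := (σv i).val_lt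
    omega
  have hwt2 {i j : Fin m} (hij : i < j) :
      wt2 (columnCode M i) (columnCode M j) % (2 * 2) = 2 * (χv i j).val := by
    rw [wt2_columnCode, Multiset.countP_add, Multiset.countP_add, countP_mem_mem_pairColumns t hij,
      countP_mem_mem_singletonColumns s hij.ne, add_zero, ht]
    have := (χv i j).val_lt
    omega
  refine ⟨_, columnCode M,
    linearIndependent_columnCode M fun i => Multiset.mem_add.2 (.inr ?_), fun v hv => ?_,
    fun i => natCast_div_eq_of_mod_eq (by norm_num) (hwt i),
    fun i j hij => natCast_div_eq_of_mod_eq (by norm_num) (hwt2 hij), fun i j k hij hjk => ?_⟩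
  · exact singleton_mem_singletonColumns (hs_pos i)
  · have := four_dvd_wt_of_mem_span_range (fun i => by have := hwt i; omega)
      (fun i j hij => by have := hwt2 hij; omega) hv
    omega
  · rw [wt3_columnCode, Multiset.countP_add, Multiset.countP_add,
      countP_mem_mem_mem_tripleColumns αv hij hjk, countP_mem_mem_mem_pairColumns t hij hjk,
      countP_mem_mem_mem_singletonColumns s hij.ne, add_zero, add_zero, ZMod.natCast_zmod_val]

/-- For any prescribed values `σ_i`, `χ_ij` (`i < j`), `α_ijk` (`i < j < k`)
in `F₂`, there is a doubly even binary code of dimension `m` with a basis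
realizing these values. -/
theorem stmt15 (m : ℕ) (hm : 0 < m) (σv : Fin m → ZMod 2)
    (χv : Fin m → Fin m → ZMod 2) (αv : Fin m → Fin m → Fin m → ZMod 2) :
    ∃ (n : ℕ) (c : Fin m → (Fin n → ZMod 2)),
      LinearIndependent (ZMod 2) c ∧
      (∀ v ∈ Submodule.span (ZMod 2) (Set.range c), wt v % 4 = 0) ∧
      (∀ i : Fin m, ((wt (c i) / 4 : ℕ) : ZMod 2) = σv i) ∧
      (∀ i j : Fin m, i < j → ((wt2 (c i) (c j) / 2 : ℕ) : ZMod 2) = χv i j) ∧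
      (∀ i j k : Fin m, i < j → j < k →
        ((wt3 (c i) (c j) (c k) : ℕ) : ZMod 2) = αv i j k) :=
  stmt15_general m σv χv αv
end

section
/- Let p be a prime. For i = 1, 2, let C_i be a coded vector space over F_p and let 𝒞_i be a coded extension of C_i. If C₁ and C₂ are isomorphic up to scalar multiple, then 𝒞₁ and 𝒞₂ are isomorphic as loops. -/
/-- An inverse property loop: a set with multiplication, identity, and two-sided
inverses satisfying `a⁻¹(ax) = x = (xa)a⁻¹`. -/
class IPLoop (L : Type*) extends Mul L, One L, Inv L where
  one_mul : ∀ a : L, 1 * a = a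
  mul_one : ∀ a : L, a * 1 = a
  inv_mul_cancel_left : ∀ a x : L, a⁻¹ * (a * x) = x
  mul_inv_cancel_right : ∀ a x : L, (x * a) * a⁻¹ = x

namespace IPLoop

variable {L : Type*} [IPLoop L]

/-- Powers with natural number exponent, `c^(n+1) = c * c^n`. -/
def npow (c : L) : ℕ → L
  | 0 => 1
  | n + 1 => c * npow c n

instance : Pow L ℕ := ⟨npow⟩

/-- Powers with integer exponent. -/
def zpow (c : L) : ℤ → L
  | Int.ofNat n => c ^ n
  | Int.negSucc n => (c ^ (n + 1))⁻¹

instance : Pow L ℤ := ⟨zpow⟩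

/-- The commutator `[c,d] = (dc)⁻¹(cd)`. -/
def comm (c d : L) : L := (d * c)⁻¹ * (c * d)

/-- The associator `[c,d,e] = (c(de))⁻¹((cd)e)`. -/
def assoc (c d e : L) : L := (c * (d * e))⁻¹ * ((c * d) * e)

/-- Membership in the center `Z(L)`. -/
def inCenter (z : L) : Prop :=
  (∀ x : L, comm z x = 1) ∧
  ∀ x y : L, assoc z x y = 1 ∧ assoc x z y = 1 ∧ assoc x y z = 1

/-- The Moufang identity `((dc)e)c = d(c(ec))`. -/
def IsMoufang (L : Type*) [IPLoop L] : Prop :=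
  ∀ c d e : L, ((d * c) * e) * c = d * (c * (e * c))

/-- A loop is of (central nilpotence) class at most 2 if every commutator and
every associator lies in the center. -/
def ClassTwo (L : Type*) [IPLoop L] : Prop :=
  (∀ c d : L, inCenter (comm c d)) ∧ ∀ c d e : L, inCenter (assoc c d e)

/-- The order of an element: least `n > 0` with `c^n = 1` (or `0` if none). -/
noncomputable def ordOf (c : L) : ℕ := sInf {n : ℕ | 0 < n ∧ c ^ n = 1}

/-- The subloop generated by a subset `S`. -/
def subloopClosure (S : Set L) : Set L :=
  ⋂₀ {T : Set L | (1 : L) ∈ T ∧ (∀ x ∈ T, x⁻¹ ∈ T) ∧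
      (∀ x ∈ T, ∀ y ∈ T, x * y ∈ T) ∧ S ⊆ T}

end IPLoop

/-- A coded vector space over `F_p`: a finite elementary abelian `p`-group `C`
(written multiplicatively) together with `σ`, `χ`, `α` taking values in the
group `Z` of order `p`, satisfying the symplectic, skew-symmetric,
power-multilinear, polarization, and multilinearity identities. -/
structure CVSData (p : ℕ) (C : Type*) [CommGroup C] where
  finiteC : Finite C
  elemC : ∀ c : C, c ^ p = 1
  σ : C → Multiplicative (ZMod p)
  χ : C → C → Multiplicative (ZMod p)
  α : C → C → C → Multiplicative (ZMod p)
  σ_pow : ∀ (c : C) (n : ℤ), σ (c ^ n) = σ c ^ n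
  σ_mul_two : p = 2 → ∀ c d : C, σ (c * d) = σ c * σ d * χ c d
  σ_mul_odd : 2 < p → ∀ c d : C, σ (c * d) = σ c * σ d
  χ_symp : ∀ c : C, χ c c = 1
  χ_skew : ∀ c d : C, χ c d = (χ d c)⁻¹
  χ_pow : ∀ (c d : C) (n : ℤ), χ (c ^ n) d = χ c d ^ n
  χ_mul : ∀ c d e : C, χ (c * d) e = χ c e * χ d e * α c d e ^ (3 : ℕ)
  α_symp : ∀ c d : C, α c d d = 1 ∧ α d c d = 1 ∧ α d d c = 1
  α_skew : ∀ c d e : C, α c d e = (α d c e)⁻¹ ∧ α c d e = α d e c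
  α_pow : ∀ (c d e : C) (n : ℤ), α (c ^ n) d e = α c d e ^ n
  α_mul : ∀ c d e f : C, α (c * d) e f = α c e f * α d e f

/-- `L` is a coded extension of the coded vector space `(C,σ,χ,α)`: there is a
surjective homomorphism `π : L → C` whose kernel is a central subgroup of
order `p` (the image of the injective homomorphism `ι` from the group `Z` of
order `p`), such that `γ^p = σ(c)`, `[γ,δ] = χ(c,d)`, and `[γ,δ,ε] = α(c,d,e)`
for all preimages `γ, δ, ε` of `c, d, e ∈ C`. -/
structure CodedExtension (p : ℕ) (C : Type*) [CommGroup C] (V : CVSData p C)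
    (L : Type*) [IPLoop L] where
  π : L → C
  ι : Multiplicative (ZMod p) → L
  π_surj : Function.Surjective π
  π_mul : ∀ x y : L, π (x * y) = π x * π y
  ι_inj : Function.Injective ι
  ι_mul : ∀ z w : Multiplicative (ZMod p), ι (z * w) = ι z * ι w
  ι_central : ∀ z : Multiplicative (ZMod p), IPLoop.inCenter (ι z)
  ker_eq : ∀ x : L, π x = 1 ↔ ∃ z : Multiplicative (ZMod p), x = ι z
  pow_eq : ∀ x : L, x ^ p = ι (V.σ (π x))
  comm_eq : ∀ x y : L, IPLoop.comm x y = ι (V.χ (π x) (π y))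
  assoc_eq : ∀ x y z : L, IPLoop.assoc x y z = ι (V.α (π x) (π y) (π z))
namespace IPLoop
variable {L : Type*} [IPLoop L]

theorem ipow_succ (x : L) (n : ℕ) : x ^ (n + 1) = x * x ^ n := rfl
theorem ipow_zero (x : L) : x ^ (0 : ℕ) = 1 := rfl

theorem lcancel {a x y : L} (h : a * x = a * y) : x = y := by
  have h2 := congrArg (fun t => a⁻¹ * t) h
  simpa only [inv_mul_cancel_left] using h2

theorem rcancel {a x y : L} (h : x * a = y * a) : x = y := by
  have h2 := congrArg (fun t => t * a⁻¹) h
  simpa only [mul_inv_cancel_right] using h2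

theorem ia (a : L) : a⁻¹ * a = 1 := by
  have := inv_mul_cancel_left a 1
  rwa [mul_one] at this

theorem ai (a : L) : a * a⁻¹ = 1 := by
  have := mul_inv_cancel_right a 1
  rwa [one_mul] at this

theorem iinv (a : L) : a⁻¹⁻¹ = a := by
  have := inv_mul_cancel_left a⁻¹ a
  rwa [ia, mul_one] at this

theorem mic (a x : L) : a * (a⁻¹ * x) = x := by
  have := inv_mul_cancel_left a⁻¹ x
  rwa [iinv] at this

theorem icr (a x : L) : (x * a⁻¹) * a = x := by
  have := mul_inv_cancel_right a⁻¹ x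
  rwa [iinv] at this

theorem eq_of_inv_mul {u v w : L} (h : u⁻¹ * v = w) : v = u * w := by
  rw [← h, mic]

end IPLoop
section CE16

open IPLoop

variable {p : ℕ} {C : Type*} [CommGroup C] {V : CVSData p C}
  {L : Type*} [IPLoop L]

namespace CodedExtension

variable (E : CodedExtension p C V L)

theorem pi_one : E.π 1 = 1 := by
  have h : E.π 1 * E.π 1 = E.π 1 * 1 := by
    rw [← E.π_mul, IPLoop.mul_one, _root_.mul_one]
  exact mul_left_cancel h

theorem iota_one : E.ι 1 = 1 := by
  have h : E.ι 1 * E.ι 1 = E.ι 1 * 1 := by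
    rw [← E.ι_mul, _root_.one_mul, IPLoop.mul_one]
  exact IPLoop.lcancel h

theorem pi_iota (z : Multiplicative (ZMod p)) : E.π (E.ι z) = 1 :=
  (E.ker_eq _).mpr ⟨z, rfl⟩

theorem pi_inv (x : L) : E.π x⁻¹ = (E.π x)⁻¹ := by
  have h : E.π x⁻¹ * E.π x = 1 := by rw [← E.π_mul, IPLoop.ia, E.pi_one]
  exact eq_inv_of_mul_eq_one_left h

theorem pi_pow (x : L) (n : ℕ) : E.π (x ^ n) = E.π x ^ n := by
  induction n with
  | zero => rw [_root_.pow_zero]; exact E.pi_one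
  | succ n ih => rw [IPLoop.ipow_succ, E.π_mul, ih, pow_succ, mul_comm]

theorem cmul (z : Multiplicative (ZMod p)) (x : L) : x * E.ι z = E.ι z * x := by
  have h := (E.ι_central z).1 x
  unfold IPLoop.comm at h
  have h2 := IPLoop.eq_of_inv_mul h
  rw [IPLoop.mul_one] at h2
  exact h2.symm

theorem ca1 (z : Multiplicative (ZMod p)) (x y : L) :
    (E.ι z * x) * y = E.ι z * (x * y) := by
  have h := ((E.ι_central z).2 x y).1
  unfold IPLoop.assoc at h
  have h2 := IPLoop.eq_of_inv_mul h
  rw [IPLoop.mul_one] at h2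
  exact h2

theorem ca2 (z : Multiplicative (ZMod p)) (x y : L) :
    x * (E.ι z * y) = E.ι z * (x * y) := by
  have h := ((E.ι_central z).2 x y).2.1
  unfold IPLoop.assoc at h
  have h2 := IPLoop.eq_of_inv_mul h
  rw [IPLoop.mul_one] at h2
  rw [← h2, E.cmul z x, E.ca1]

theorem ca3 (z w : Multiplicative (ZMod p)) (x : L) :
    E.ι z * (E.ι w * x) = E.ι (z * w) * x := by
  rw [E.ι_mul, E.ca1]

theorem ccancel {z w : Multiplicative (ZMod p)} {m : L}
    (h : E.ι z * m = E.ι w * m) : z = w :=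
  E.ι_inj (IPLoop.rcancel h)

theorem assoc_corr (x y z : L) :
    (x * y) * z = E.ι (V.α (E.π x) (E.π y) (E.π z)) * (x * (y * z)) := by
  have h := E.assoc_eq x y z
  unfold IPLoop.assoc at h
  have h2 := IPLoop.eq_of_inv_mul h
  rw [h2, E.cmul]

theorem assoc_corr' (x y z : L) :
    x * (y * z) = E.ι (V.α (E.π x) (E.π y) (E.π z))⁻¹ * ((x * y) * z) := by
  rw [E.assoc_corr x y z, E.ca3, inv_mul_cancel, E.iota_one, IPLoop.one_mul]

theorem comm_corr (x y : L) :
    x * y = E.ι (V.χ (E.π x) (E.π y)) * (y * x) := by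
  have h := E.comm_eq x y
  unfold IPLoop.comm at h
  have h2 := IPLoop.eq_of_inv_mul h
  rw [h2, E.cmul]

end CodedExtension
end CE16
section CE16b

open IPLoop

variable {p : ℕ} {C : Type*} [CommGroup C] {V : CVSData p C}
  {L : Type*} [IPLoop L]

namespace CVSData

theorem alpha_pow_nat (V : CVSData p C) (c d e : C) (n : ℕ) :
    V.α (c ^ n) d e = V.α c d e ^ n := by
  have h := V.α_pow c d e (n : ℤ)
  rwa [zpow_natCast, zpow_natCast] at h

theorem alpha_cyc (V : CVSData p C) (c d e : C) : V.α c d e = V.α d e c :=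
  (V.α_skew c d e).2

theorem alpha_ccc (V : CVSData p C) (c : C) : V.α c c c = 1 :=
  (V.α_symp c c).1

theorem alpha_ppp (V : CVSData p C) (c : C) (m n : ℕ) :
    V.α c (c ^ m) (c ^ n) = 1 := by
  rw [V.alpha_cyc, V.alpha_pow_nat]
  have h : V.α c (c ^ n) c = 1 := by
    rw [V.alpha_cyc, V.alpha_pow_nat, V.alpha_cyc, V.alpha_ccc, one_pow]
  rw [h, one_pow]

end CVSData

namespace CodedExtension

theorem ipow_add (E : CodedExtension p C V L) (x : L) (m n : ℕ) : x ^ (m + n) = x ^ m * x ^ n := by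
  induction m with
  | zero => rw [Nat.zero_add, IPLoop.ipow_zero, IPLoop.one_mul]
  | succ m ih =>
      have h : m + 1 + n = (m + n) + 1 := by omega
      rw [h, IPLoop.ipow_succ, ih, IPLoop.ipow_succ]
      have h2 := E.assoc_corr' x (x ^ m) (x ^ n)
      rw [E.pi_pow, E.pi_pow] at h2
      have h3 : V.α (E.π x) (E.π x ^ m) (E.π x ^ n) = 1 := V.alpha_ppp _ m n
      rw [h3, inv_one, E.iota_one, IPLoop.one_mul] at h2
      exact h2

theorem ov_lemma (E : CodedExtension p C V L) [NeZero p] (x : L) (m n : ZMod p) :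
    x ^ m.val * x ^ n.val =
      E.ι (if p ≤ m.val + n.val then V.σ (E.π x) else 1) * x ^ (m + n).val := by
  have hm := ZMod.val_lt m
  have hn := ZMod.val_lt n
  rw [← E.ipow_add]
  by_cases h : p ≤ m.val + n.val
  · have hv : (m + n).val = m.val + n.val - p := by
      rw [ZMod.val_add, Nat.mod_eq_sub_mod h, Nat.mod_eq_of_lt (by omega)]
    have hsum : m.val + n.val = (m + n).val + p := by omega
    rw [if_pos h, hsum, E.ipow_add, E.pow_eq, E.cmul]
  · have hv : (m + n).val = m.val + n.val := by
      rw [ZMod.val_add, Nat.mod_eq_of_lt (by omega)]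
    rw [if_neg h, hv, E.iota_one, IPLoop.one_mul]

end CodedExtension

theorem pow_mod_p {C : Type*} [CommGroup C] {p : ℕ} (x : C) (hx : x ^ p = 1)
    (n : ℕ) : x ^ n = x ^ (n % p) := by
  conv_lhs => rw [← Nat.mod_add_div n p, pow_add, pow_mul, hx, one_pow, mul_one]

end CE16b
section CE16c

open IPLoop

variable {p : ℕ} {C : Type*} [CommGroup C] {V : CVSData p C}
  {L : Type*} [IPLoop L] {k : ℕ}

def sL (γ : Fin k → L) (l : List (Fin k)) (v : Fin k → ZMod p) : L :=
  l.foldr (fun i acc => γ i ^ (v i).val * acc) 1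

def cpC (p : ℕ) (e : Fin k → C) (l : List (Fin k)) (v : Fin k → ZMod p) : C :=
  l.foldr (fun i acc => e i ^ (v i).val * acc) 1

theorem sL_nil (γ : Fin k → L) (v : Fin k → ZMod p) : sL γ [] v = 1 := rfl

theorem sL_cons (γ : Fin k → L) (i : Fin k) (t : List (Fin k))
    (v : Fin k → ZMod p) : sL γ (i :: t) v = γ i ^ (v i).val * sL γ t v := rfl

theorem cpC_nil (e : Fin k → C) (v : Fin k → ZMod p) : cpC p e [] v = 1 := rfl

theorem cpC_cons (e : Fin k → C) (i : Fin k) (t : List (Fin k))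
    (v : Fin k → ZMod p) :
    cpC p e (i :: t) v = e i ^ (v i).val * cpC p e t v := rfl

theorem pi_sL (E : CodedExtension p C V L) (γ : Fin k → L) (e : Fin k → C)
    (hγ : ∀ i, E.π (γ i) = e i) (l : List (Fin k)) (v : Fin k → ZMod p) :
    E.π (sL γ l v) = cpC p e l v := by
  induction l with
  | nil => exact E.pi_one
  | cons i t ih => rw [sL_cons, cpC_cons, E.π_mul, E.pi_pow, hγ, ih]

theorem cpC_mul [NeZero p] (e : Fin k → C) (hC : ∀ c : C, c ^ p = 1)
    (l : List (Fin k)) (v w : Fin k → ZMod p) :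
    cpC p e l v * cpC p e l w = cpC p e l (v + w) := by
  induction l with
  | nil => rw [cpC_nil, cpC_nil, cpC_nil, one_mul]

  | cons i t ih =>
      rw [cpC_cons, cpC_cons, cpC_cons, mul_mul_mul_comm, ih, ← pow_add]
      congr 1
      rw [Pi.add_apply, ZMod.val_add, ← pow_mod_p (e i) (hC (e i))]

theorem decomp (E : CodedExtension p C V L) {x u : L} (h : E.π x = E.π u) :
    ∃ z : Multiplicative (ZMod p), x = E.ι z * u := by
  have h1 : E.π (x * u⁻¹) = 1 := by
    rw [E.π_mul, E.pi_inv, h, mul_inv_cancel]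
  obtain ⟨z, hz⟩ := (E.ker_eq _).mp h1
  refine ⟨z, ?_⟩
  rw [← hz, IPLoop.icr]

theorem factor_exists [NeZero p] (E : CodedExtension p C V L)
    (γ : Fin k → L) (e : Fin k → C) (hγ : ∀ i, E.π (γ i) = e i)
    (hC : ∀ c : C, c ^ p = 1) (l : List (Fin k)) (v w : Fin k → ZMod p) :
    ∃ z : Multiplicative (ZMod p),
      sL γ l v * sL γ l w = E.ι z * sL γ l (v + w) := by
  apply decomp E
  rw [E.π_mul, pi_sL E γ e hγ, pi_sL E γ e hγ, pi_sL E γ e hγ,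
    cpC_mul e hC]

noncomputable def FE [NeZero p] (E : CodedExtension p C V L)
    (γ : Fin k → L) (e : Fin k → C) (hγ : ∀ i, E.π (γ i) = e i)
    (hC : ∀ c : C, c ^ p = 1) (l : List (Fin k)) (v w : Fin k → ZMod p) :
    Multiplicative (ZMod p) :=
  Classical.choose (factor_exists E γ e hγ hC l v w)

theorem sL_mul [NeZero p] (E : CodedExtension p C V L)
    (γ : Fin k → L) (e : Fin k → C) (hγ : ∀ i, E.π (γ i) = e i)
    (hC : ∀ c : C, c ^ p = 1) (l : List (Fin k)) (v w : Fin k → ZMod p) :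
    sL γ l v * sL γ l w = E.ι (FE E γ e hγ hC l v w) * sL γ l (v + w) :=
  Classical.choose_spec (factor_exists E γ e hγ hC l v w)

theorem FE_unique [NeZero p] (E : CodedExtension p C V L)
    (γ : Fin k → L) (e : Fin k → C) (hγ : ∀ i, E.π (γ i) = e i)
    (hC : ∀ c : C, c ^ p = 1) (l : List (Fin k)) (v w : Fin k → ZMod p)
    {z : Multiplicative (ZMod p)}
    (h : sL γ l v * sL γ l w = E.ι z * sL γ l (v + w)) :
    z = FE E γ e hγ hC l v w :=
  E.ccancel (h.symm.trans (sL_mul E γ e hγ hC l v w))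

theorem FE_nil [NeZero p] (E : CodedExtension p C V L)
    (γ : Fin k → L) (e : Fin k → C) (hγ : ∀ i, E.π (γ i) = e i)
    (hC : ∀ c : C, c ^ p = 1) (v w : Fin k → ZMod p) :
    FE E γ e hγ hC [] v w = 1 := by
  refine (FE_unique E γ e hγ hC [] v w ?_).symm
  rw [sL_nil, sL_nil, sL_nil, E.iota_one, IPLoop.one_mul]

end CE16c
section CE16d

open IPLoop

variable {p : ℕ} {C : Type*} [CommGroup C] {V : CVSData p C}
  {L : Type*} [IPLoop L] {k : ℕ}

theorem key_step [NeZero p] (E : CodedExtension p C V L)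
    (x A B u : L) (m n : ZMod p) (z : Multiplicative (ZMod p))
    (hAB : A * B = E.ι z * u) :
    (x ^ m.val * A) * (x ^ n.val * B) =
      E.ι ((V.α (E.π (x ^ m.val * A)) (E.π (x ^ n.val)) (E.π B))⁻¹ *
        ((V.α (E.π (x ^ m.val)) (E.π A) (E.π (x ^ n.val)) *
          (V.χ (E.π A) (E.π (x ^ n.val)) *
            ((V.α (E.π (x ^ m.val)) (E.π (x ^ n.val)) (E.π A))⁻¹ *
              (if p ≤ m.val + n.val then V.σ (E.π x) else 1)))) *
          (V.α (E.π (x ^ (m + n).val)) (E.π A) (E.π B) * z))) *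
      (x ^ (m + n).val * u) := by
  rw [E.assoc_corr' (x ^ m.val * A) (x ^ n.val) B,
      E.assoc_corr (x ^ m.val) A (x ^ n.val),
      E.comm_corr A (x ^ n.val),
      E.ca2 (V.χ (E.π A) (E.π (x ^ n.val))) (x ^ m.val) (x ^ n.val * A),
      E.assoc_corr' (x ^ m.val) (x ^ n.val) A,
      E.ov_lemma x m n,
      E.ca1 (if p ≤ m.val + n.val then V.σ (E.π x) else 1) (x ^ (m + n).val) A,
      E.ca3, E.ca3, E.ca3,
      E.ca1, E.assoc_corr (x ^ (m + n).val) A B, hAB,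
      E.ca2 z (x ^ (m + n).val) u, E.ca3, E.ca3, E.ca3]
  congr 2
  simp only [mul_assoc]

end CE16d
section CE16e

open IPLoop

variable {p : ℕ} {C : Type*} [CommGroup C] {V : CVSData p C}
  {L : Type*} [IPLoop L] {k : ℕ}

theorem FE_cons [NeZero p] (E : CodedExtension p C V L)
    (γ : Fin k → L) (e : Fin k → C) (hγ : ∀ i, E.π (γ i) = e i)
    (hC : ∀ c : C, c ^ p = 1) (i : Fin k) (t : List (Fin k))
    (v w : Fin k → ZMod p) :
    FE E γ e hγ hC (i :: t) v w =
      (V.α (e i ^ (v i).val * cpC p e t v) (e i ^ (w i).val) (cpC p e t w))⁻¹ *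
        ((V.α (e i ^ (v i).val) (cpC p e t v) (e i ^ (w i).val) *
          (V.χ (cpC p e t v) (e i ^ (w i).val) *
            ((V.α (e i ^ (v i).val) (e i ^ (w i).val) (cpC p e t v))⁻¹ *
              (if p ≤ (v i).val + (w i).val then V.σ (e i) else 1)))) *
          (V.α (e i ^ ((v i + w i).val)) (cpC p e t v) (cpC p e t w) *
            FE E γ e hγ hC t v w)) := by
  refine (FE_unique E γ e hγ hC (i :: t) v w ?_).symm
  have h := key_step E (γ i) (sL γ t v) (sL γ t w) (sL γ t (v + w))
    (v i) (w i) (FE E γ e hγ hC t v w) (sL_mul E γ e hγ hC t v w)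
  simp only [E.pi_pow, E.π_mul, hγ, pi_sL E γ e hγ] at h
  rw [sL_cons, sL_cons, sL_cons, Pi.add_apply]
  exact h

end CE16e
section CE16f

open IPLoop

variable {p : ℕ} {k : ℕ}

theorem cpC_map {C₁ : Type*} [CommGroup C₁] {C₂ : Type*} [CommGroup C₂]
    (φ : C₁ ≃* C₂) (e : Fin k → C₁) (e₂ : Fin k → C₂)
    (he₂ : ∀ i, e₂ i = φ (e i)) (l : List (Fin k)) (v : Fin k → ZMod p) :
    cpC p e₂ l v = φ (cpC p e l v) := by
  induction l with
  | nil => rw [cpC_nil, cpC_nil, map_one]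
  | cons i t ih => rw [cpC_cons, cpC_cons, map_mul, map_pow, ih, he₂]

theorem FE_transfer [NeZero p]
    {C₁ : Type*} [CommGroup C₁] {V₁ : CVSData p C₁}
    {C₂ : Type*} [CommGroup C₂] {V₂ : CVSData p C₂}
    {L₁ : Type*} [IPLoop L₁] (E₁ : CodedExtension p C₁ V₁ L₁)
    {L₂ : Type*} [IPLoop L₂] (E₂ : CodedExtension p C₂ V₂ L₂)
    (φ : C₁ ≃* C₂) (a : Multiplicative (ZMod p) ≃* Multiplicative (ZMod p))
    (hσ : ∀ c : C₁, V₂.σ (φ c) = a (V₁.σ c))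
    (hχ : ∀ c d : C₁, V₂.χ (φ c) (φ d) = a (V₁.χ c d))
    (hα : ∀ c d e : C₁, V₂.α (φ c) (φ d) (φ e) = a (V₁.α c d e))
    (e : Fin k → C₁) (e₂ : Fin k → C₂) (he₂ : ∀ i, e₂ i = φ (e i))
    (γ₁ : Fin k → L₁) (hγ₁ : ∀ i, E₁.π (γ₁ i) = e i)
    (γ₂ : Fin k → L₂) (hγ₂ : ∀ i, E₂.π (γ₂ i) = e₂ i)
    (hC₁ : ∀ c : C₁, c ^ p = 1) (hC₂ : ∀ c : C₂, c ^ p = 1)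
    (l : List (Fin k)) (v w : Fin k → ZMod p) :
    FE E₂ γ₂ e₂ hγ₂ hC₂ l v w = a (FE E₁ γ₁ e hγ₁ hC₁ l v w) := by
  induction l with
  | nil => rw [FE_nil, FE_nil, map_one]
  | cons i t ih =>
      rw [FE_cons E₂ γ₂ e₂ hγ₂ hC₂ i t v w, FE_cons E₁ γ₁ e hγ₁ hC₁ i t v w, ih]
      simp only [he₂, cpC_map φ e e₂ he₂, ← map_pow, ← map_mul, hσ, hχ, hα,
        apply_ite a, map_one, map_mul, map_inv]
      rw [← map_mul φ (e i ^ (v i).val) (cpC p e t v), hα]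

end CE16f
section CE16g

open IPLoop

variable {p : ℕ} {k : ℕ}

theorem dec_mul {C : Type*} [CommGroup C] {V : CVSData p C}
    {L : Type*} [IPLoop L] (E : CodedExtension p C V L)
    (z₁ z₂ w : Multiplicative (ZMod p)) (u₁ u₂ u₃ : L)
    (h : u₁ * u₂ = E.ι w * u₃) :
    (E.ι z₁ * u₁) * (E.ι z₂ * u₂) = E.ι (z₂ * z₁ * w) * u₃ := by
  rw [E.ca2 z₂ (E.ι z₁ * u₁) u₂, E.ca1 z₁ u₁ u₂, h, E.ca3, E.ca3]

theorem pi_iota_mul {C : Type*} [CommGroup C] {V : CVSData p C}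
    {L : Type*} [IPLoop L] (E : CodedExtension p C V L)
    (z : Multiplicative (ZMod p)) (u : L) :
    E.π (E.ι z * u) = E.π u := by
  rw [E.π_mul, E.pi_iota, _root_.one_mul]

theorem final_assembly [NeZero p]
    {C₁ : Type*} [CommGroup C₁] {V₁ : CVSData p C₁}
    {C₂ : Type*} [CommGroup C₂] {V₂ : CVSData p C₂}
    {L₁ : Type*} [IPLoop L₁] (E₁ : CodedExtension p C₁ V₁ L₁)
    {L₂ : Type*} [IPLoop L₂] (E₂ : CodedExtension p C₂ V₂ L₂)
    (φ : C₁ ≃* C₂) (a : Multiplicative (ZMod p) ≃* Multiplicative (ZMod p))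
    (hσ : ∀ c : C₁, V₂.σ (φ c) = a (V₁.σ c))
    (hχ : ∀ c d : C₁, V₂.χ (φ c) (φ d) = a (V₁.χ c d))
    (hα : ∀ c d e : C₁, V₂.α (φ c) (φ d) (φ e) = a (V₁.α c d e))
    (e : Fin k → C₁) (e₂ : Fin k → C₂) (he₂ : ∀ i, e₂ i = φ (e i))
    (γ₁ : Fin k → L₁) (hγ₁ : ∀ i, E₁.π (γ₁ i) = e i)
    (γ₂ : Fin k → L₂) (hγ₂ : ∀ i, E₂.π (γ₂ i) = e₂ i)
    (coord : C₁ → (Fin k → ZMod p))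
    (hScoord : ∀ c, cpC p e (List.finRange k) (coord c) = c)
    (hcoordS : ∀ v, coord (cpC p e (List.finRange k) v) = v)
    (coord_add : ∀ c d, coord (c * d) = coord c + coord d) :
    ∃ f : L₁ → L₂, Function.Bijective f ∧ ∀ x y : L₁, f (x * y) = f x * f y := by
  have hC₁ : ∀ c : C₁, c ^ p = 1 := V₁.elemC
  have hC₂ : ∀ c : C₂, c ^ p = 1 := V₂.elemC
  have dec₁ : ∀ x : L₁,
      ∃ z, x = E₁.ι z * sL γ₁ (List.finRange k) (coord (E₁.π x)) := by
    intro x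
    apply decomp E₁
    rw [pi_sL E₁ γ₁ e hγ₁, hScoord]
  have fπ : ∀ x : L₁, ∀ z : Multiplicative (ZMod p),
      E₂.π (E₂.ι z * sL γ₂ (List.finRange k) (coord (E₁.π x))) = φ (E₁.π x) := by
    intro x z
    rw [pi_iota_mul, pi_sL E₂ γ₂ e₂ hγ₂, cpC_map φ e e₂ he₂, hScoord]
  refine ⟨fun x => E₂.ι (a (dec₁ x).choose) *
      sL γ₂ (List.finRange k) (coord (E₁.π x)), ⟨?_, ?_⟩, ?_⟩
  · -- injective
    intro x y h
    dsimp only at h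
    have hpx : φ (E₁.π x) = φ (E₁.π y) := by
      rw [← fπ x (a (dec₁ x).choose), ← fπ y (a (dec₁ y).choose)]
      exact congrArg E₂.π h
    have hxy : E₁.π x = E₁.π y := φ.injective hpx
    have hx := (dec₁ x).choose_spec
    have hy := (dec₁ y).choose_spec
    generalize hcx : (dec₁ x).choose = cx at h hx
    generalize hcy : (dec₁ y).choose = cy at h hy
    rw [hxy] at h hx
    have hcc : cx = cy := a.injective (E₂.ccancel h)
    rw [hcc, ← hy] at hx
    exact hx
  · -- surjective
    intro y
    have hy : E₂.π y =
        E₂.π (sL γ₂ (List.finRange k) (coord (φ.symm (E₂.π y)))) := by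
      rw [pi_sL E₂ γ₂ e₂ hγ₂, cpC_map φ e e₂ he₂, hScoord,
        MulEquiv.apply_symm_apply]
    obtain ⟨z, hz⟩ := decomp E₂ hy
    refine ⟨E₁.ι (a.symm z) *
      sL γ₁ (List.finRange k) (coord (φ.symm (E₂.π y))), ?_⟩
    dsimp only
    have hspec := (dec₁ (E₁.ι (a.symm z) *
      sL γ₁ (List.finRange k) (coord (φ.symm (E₂.π y))))).choose_spec
    generalize hch : (dec₁ (E₁.ι (a.symm z) *
      sL γ₁ (List.finRange k) (coord (φ.symm (E₂.π y))))).choose = ch at hspec ⊢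
    have hcoord : coord (E₁.π (E₁.ι (a.symm z) *
        sL γ₁ (List.finRange k) (coord (φ.symm (E₂.π y))))) =
        coord (φ.symm (E₂.π y)) := by
      rw [pi_iota_mul, pi_sL E₁ γ₁ e hγ₁, hcoordS]
    rw [hcoord] at hspec ⊢
    have hc : a.symm z = ch := E₁.ccancel hspec
    rw [← hc, MulEquiv.apply_symm_apply, ← hz]
  · -- multiplicative
    intro x y
    dsimp only
    have hx := (dec₁ x).choose_spec
    have hy := (dec₁ y).choose_spec
    have hxyspec := (dec₁ (x * y)).choose_spec
    generalize hcx : (dec₁ x).choose = cx at hx ⊢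
    generalize hcy : (dec₁ y).choose = cy at hy ⊢
    generalize hcxy : (dec₁ (x * y)).choose = cxy at hxyspec ⊢
    have hπxy : coord (E₁.π (x * y)) = coord (E₁.π x) + coord (E₁.π y) := by
      rw [E₁.π_mul, coord_add]
    rw [hπxy] at hxyspec ⊢
    have hmul : x * y = E₁.ι (cy * cx *
        FE E₁ γ₁ e hγ₁ hC₁ (List.finRange k) (coord (E₁.π x)) (coord (E₁.π y))) *
        sL γ₁ (List.finRange k) (coord (E₁.π x) + coord (E₁.π y)) := by
      conv_lhs => rw [hx, hy]
      exact dec_mul E₁ cx cy _ _ _ _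
        (sL_mul E₁ γ₁ e hγ₁ hC₁ (List.finRange k) _ _)
    have hc : cxy = cy * cx *
        FE E₁ γ₁ e hγ₁ hC₁ (List.finRange k) (coord (E₁.π x)) (coord (E₁.π y)) :=
      E₁.ccancel (hxyspec.symm.trans hmul)
    rw [hc]
    rw [dec_mul E₂ (a cx) (a cy) _ _ _ _
      (sL_mul E₂ γ₂ e₂ hγ₂ hC₂ (List.finRange k) (coord (E₁.π x)) (coord (E₁.π y)))]
    rw [FE_transfer E₁ E₂ φ a hσ hχ hα e e₂ he₂ γ₁ hγ₁ γ₂ hγ₂ hC₁ hC₂,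
      map_mul, map_mul]

end CE16g

/-- If two coded vector spaces over `F_p` are isomorphic up to scalar multiple
(via a vector space isomorphism `φ` and an automorphism `a` of `Z`), then any
coded extensions of them are isomorphic as loops. -/
theorem stmt16 (p : ℕ) (hp : p.Prime)
    {C₁ : Type*} [CommGroup C₁] (V₁ : CVSData p C₁)
    {C₂ : Type*} [CommGroup C₂] (V₂ : CVSData p C₂)
    {L₁ : Type*} [IPLoop L₁] (E₁ : CodedExtension p C₁ V₁ L₁)
    {L₂ : Type*} [IPLoop L₂] (E₂ : CodedExtension p C₂ V₂ L₂)
    (φ : C₁ ≃* C₂) (a : Multiplicative (ZMod p) ≃* Multiplicative (ZMod p))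
    (hσ : ∀ c : C₁, V₂.σ (φ c) = a (V₁.σ c))
    (hχ : ∀ c d : C₁, V₂.χ (φ c) (φ d) = a (V₁.χ c d))
    (hα : ∀ c d e : C₁, V₂.α (φ c) (φ d) (φ e) = a (V₁.α c d e)) :
    ∃ f : L₁ → L₂, Function.Bijective f ∧ ∀ x y : L₁, f (x * y) = f x * f y := by
  haveI : Fact p.Prime := ⟨hp⟩
  haveI : NeZero p := ⟨hp.ne_zero⟩
  haveI : Finite C₁ := V₁.finiteC
  haveI : Finite (Additive C₁) := inferInstanceAs (Finite C₁)
  have hmod : ∀ x : Additive C₁, p • x = 0 := by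
    intro x
    have h := congrArg Additive.ofMul (V₁.elemC (Additive.toMul x))
    simpa [ofMul_pow] using h
  letI : Module (ZMod p) (Additive C₁) := AddCommGroup.zmodModule hmod
  have htest : Module (ZMod p) (Additive C₁) := inferInstance
  haveI : Module.Finite (ZMod p) (Additive C₁) := Module.Finite.of_finite
  set k := Module.finrank (ZMod p) (Additive C₁) with hk
  let b : Module.Basis (Fin k) (ZMod p) (Additive C₁) :=
    Module.finBasis (ZMod p) (Additive C₁)
  have hsmul : ∀ (m : ZMod p) (x : Additive C₁), m • x = m.val • x := by
    intro m x
    have h1 : ((m.val : ℕ) : ZMod p) = m := by rw [ZMod.natCast_val, ZMod.cast_id]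
    have h2 := Nat.cast_smul_eq_nsmul (R := ZMod p) m.val x
    rw [h1] at h2
    exact h2
  obtain ⟨e, he⟩ : ∃ e : Fin k → C₁, ∀ i, Additive.ofMul (e i) = b i :=
    ⟨fun i => Additive.toMul (b i), fun _ => rfl⟩
  obtain ⟨coord, hcd⟩ : ∃ coord : C₁ → (Fin k → ZMod p),
      ∀ c, coord c = b.equivFun (Additive.ofMul c) := ⟨_, fun _ => rfl⟩
  have hsum : ∀ (l : List (Fin k)) (v : Fin k → ZMod p),
      Additive.ofMul (cpC p e l v) = (l.map (fun i => v i • b i)).sum := by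
    intro l v
    induction l with
    | nil => rw [cpC_nil, List.map_nil, List.sum_nil, ofMul_one]
    | cons i t ih =>
        rw [cpC_cons, List.map_cons, List.sum_cons, ofMul_mul, ih]
        congr 1
        rw [ofMul_pow, he, ← hsmul]
  have hS : ∀ v, Additive.ofMul (cpC p e (List.finRange k) v) =
      b.equivFun.symm v := by
    intro v
    rw [hsum, ← Fin.sum_univ_def, Module.Basis.equivFun_symm_apply]
  have hScoord : ∀ c, cpC p e (List.finRange k) (coord c) = c := by
    intro c
    have h2 : b.equivFun.symm (coord c) = Additive.ofMul c := by
      rw [hcd, LinearEquiv.symm_apply_apply]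
    exact Additive.ofMul.injective ((hS (coord c)).trans h2)
  have hcoordS : ∀ v, coord (cpC p e (List.finRange k) v) = v := by
    intro v
    rw [hcd, hS, LinearEquiv.apply_symm_apply]
  have coord_add : ∀ c d, coord (c * d) = coord c + coord d := by
    intro c d
    rw [hcd, hcd, hcd, ofMul_mul, map_add]
  choose γ₁ hγ₁ using fun i => E₁.π_surj (e i)
  choose γ₂ hγ₂ using fun i => E₂.π_surj (φ (e i))
  exact final_assembly E₁ E₂ φ a hσ hχ hα e (fun i => φ (e i)) (fun _ => rfl)
    γ₁ hγ₁ γ₂ hγ₂ coord hScoord hcoordS coord_add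
end
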